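/- (Gluing of local iterated integrals) Let α : [0,T] → (1/3, 1) satisfy A1, X ∈ C^{α(·)}([0,T];ℝ^d), and let P = {[ρ₀,ρ₁],...,[ρ_{N−1},ρ_N]} be a partition of [0,T]. Suppose on each square [ρ_i, ρ_{i+1}]² there exists X^{|[ρ_i,ρ_{i+1}]} : [ρ_i,ρ_{i+1}]² → ℝ^{d×d} satisfying Chen's relation δ(𝕏)(s,u,t) = X_{s,u} ⊗ X_{u,t} and the bound |𝕏(s,t)| ≲ |t−s|^{2α(s)∧1} locally. Define for s ∈ [ρ_i,ρ_{i+1}], t ∈ [ρ_j,ρ_{j+1}], i ≤ j: 𝕏(s,t) := Σ_{[u,v] ∈ P∩[s,t]} (𝕏^{|[u,v]}(u,v) + X_{s,u} ⊗ X_{u,v}). Then the global 𝕏 satisfies Chen's relation δ(𝕏)(s,r,t) = X_{s,r} ⊗ X_{r,t} for all s < r < t in [0,T], and ‖𝕏‖_{2α(·)∧1;[0,T]} < ∞, so (X, 𝕏) is a variable order rough path in 𝒞^{α(·)}([0,T];ℝ^d). -/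

import Mathlib

noncomputable def tensor {d : ℕ} (a b : EuclideanSpace ℝ (Fin d)) :
    EuclideanSpace ℝ (Fin d × Fin d) :=
  (WithLp.equiv 2 (Fin d × Fin d → ℝ)).symm fun p => a p.1 * b p.2

/-!
Chen's relation says exactly that `𝕏(s,t) + X_s ⊗ X_{s,t}` is an increment `F t - F s` of a
primitive `F` (`chenLift`). Each local iterated integral has such a primitive on its piece, and
these glue across the partition into a global primitive (a sum of the local ones, each frozen
outside its piece), whose `chenLift` satisfies Chen's relation everywhere and extends the local
iterated integrals.

For the analytic bound, a window `[s,t]` shorter than the mesh of the partition contains at most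
one partition point `r`, and Chen's relation gives `𝕏(s,t) = 𝕏(s,r) + 𝕏(r,t) + X_{s,r} ⊗ X_{r,t}`.
The exponents `α(r)` appearing there are traded for `α(s)` using A1: `(r-s)^(α(r)-α(s))` is
bounded, hence so is `z^(α(r)-α(s))` for every `z ∈ [r-s, 1]`. Windows longer than the mesh are
handled by the boundedness of `X` and of the primitive.
-/

open Set Filter Topology Real

section Tensor

variable {d : ℕ}

lemma tensor_apply (a b : EuclideanSpace ℝ (Fin d)) (p : Fin d × Fin d) :
    tensor a b p = a p.1 * b p.2 := rfl

@[simp]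
lemma tensor_zero_left (b : EuclideanSpace ℝ (Fin d)) : tensor 0 b = 0 := by
  ext p
  simp [tensor_apply]

lemma norm_tensor (a b : EuclideanSpace ℝ (Fin d)) : ‖tensor a b‖ = ‖a‖ * ‖b‖ := by
  rw [EuclideanSpace.norm_eq, EuclideanSpace.norm_eq, EuclideanSpace.norm_eq,
    ← Real.sqrt_mul (by positivity)]
  simp only [Real.norm_eq_abs, sq_abs, tensor_apply, Fintype.sum_prod_type, mul_pow,
    Finset.sum_mul_sum]

end Tensor

section RpowBounds

lemma rpow_le_max_one {x L e : ℝ} (hx : 0 ≤ x) (hxL : x ≤ L) (he0 : 0 ≤ e) (he1 : e ≤ 1) :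
    x ^ e ≤ max 1 L := by
  rcases le_total x 1 with h | h
  · exact (rpow_le_one hx h he0).trans (le_max_left _ _)
  · calc x ^ e ≤ x ^ (1 : ℝ) := rpow_le_rpow_of_exponent_le h he1
      _ ≤ max 1 L := (rpow_one x).trans_le (hxL.trans (le_max_right _ _))

lemma min_le_rpow {δ x e : ℝ} (hδ : 0 < δ) (hδx : δ ≤ x) (he0 : 0 ≤ e) (he1 : e ≤ 1) :
    min δ 1 ≤ x ^ e := by
  rcases le_total 1 x with h | h
  · exact (min_le_right _ _).trans (one_le_rpow h he0)
  · calc min δ 1 ≤ x ^ (1 : ℝ) := (min_le_left _ _).trans (hδx.trans_eq (rpow_one x).symm)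
      _ ≤ x ^ e := rpow_le_rpow_of_exponent_ge (hδ.trans_le hδx) h he1

lemma rpow_le_max_mul_rpow {x z a b C : ℝ} (hx : 0 < x) (hxz : x ≤ z) (hz : z ≤ 1)
    (hC : x ^ (b - a) ≤ C) : z ^ b ≤ max C 1 * z ^ a := by
  have hz0 : 0 < z := hx.trans_le hxz
  have h : z ^ (b - a) ≤ max C 1 := by
    rcases le_total 0 (b - a) with hab | hab
    · exact (rpow_le_one hz0.le hz hab).trans (le_max_right _ _)
    · exact (rpow_le_rpow_of_nonpos hx hxz hab).trans (hC.trans (le_max_left _ _))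
  calc z ^ b = z ^ (b - a) * z ^ a := by rw [← rpow_add hz0, sub_add_cancel]
    _ ≤ max C 1 * z ^ a := mul_le_mul_of_nonneg_right h (rpow_nonneg hz0.le _)

lemma rpow_min_one_le {z a b K : ℝ} (hz0 : 0 < z) (hz1 : z ≤ 1) (hK : 1 ≤ K)
    (h : z ^ a ≤ K * z ^ b) : z ^ min a 1 ≤ K * z ^ min b 1 := by
  rcases min_choice a 1 with ha | ha <;> rw [ha]
  · exact h.trans (mul_le_mul_of_nonneg_left
      (rpow_le_rpow_of_exponent_ge hz0 hz1 (min_le_left _ _)) (zero_le_one.trans hK))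
  · calc z ^ (1 : ℝ) ≤ z ^ min b 1 := rpow_le_rpow_of_exponent_ge hz0 hz1 (min_le_right _ _)
      _ ≤ K * z ^ min b 1 := le_mul_of_one_le_left (rpow_nonneg hz0.le _) hK

variable {E : Type*} [SeminormedAddGroup E]

lemma nonneg_of_norm_le_mul_rpow {v : E} {K x e : ℝ} (hx : 0 < x) (h : ‖v‖ ≤ K * x ^ e) :
    0 ≤ K :=
  nonneg_of_mul_nonneg_left ((norm_nonneg v).trans h) (rpow_pos_of_pos hx e)

lemma norm_le_of_rpow_bound {f : ℝ → E} {a b K e : ℝ} (he0 : 0 ≤ e) (he1 : e ≤ 1)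
    (ha : f a = 0) (hf : ∀ u, a < u → u ≤ b → ‖f u‖ ≤ K * (u - a) ^ e) {u : ℝ}
    (hu : u ∈ Icc a b) : ‖f u‖ ≤ |K| * max 1 (b - a) := by
  rcases hu.1.eq_or_lt with rfl | hau
  · rw [ha, norm_zero]
    positivity
  · calc ‖f u‖ ≤ K * (u - a) ^ e := hf u hau hu.2
      _ ≤ |K| * max 1 (b - a) :=
        mul_le_mul (le_abs_self K) (rpow_le_max_one (by linarith) (by linarith [hu.2]) he0 he1)
          (rpow_nonneg (by linarith) _) (abs_nonneg K)

lemma exists_norm_le_of_rpow_bound {X : ℝ → E} {a b K e : ℝ} (he0 : 0 ≤ e) (he1 : e ≤ 1)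
    (hX : ∀ u, a < u → u ≤ b → ‖X u - X a‖ ≤ K * (u - a) ^ e) :
    ∃ C, ∀ u ∈ Icc a b, ‖X u‖ ≤ C :=
  ⟨‖X a‖ + |K| * max 1 (b - a), fun _ hu => (norm_le_insert' _ _).trans
    (add_le_add le_rfl
      (norm_le_of_rpow_bound he0 he1 (f := fun v => X v - X a) (sub_self _) hX hu))⟩

lemma exists_rpow_bound_of_bounded {f : ℝ → ℝ → E} {e : ℝ → ℝ} {a b δ C K : ℝ} (hδ : 0 < δ)
    (he : ∀ s ∈ Icc a b, 0 ≤ e s ∧ e s ≤ 1)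
    (hC : ∀ s t, a ≤ s → s < t → t ≤ b → ‖f s t‖ ≤ C)
    (hK : ∀ s t, a ≤ s → s < t → t ≤ b → t - s < δ → ‖f s t‖ ≤ K * (t - s) ^ e s) :
    ∃ K', ∀ s t, a ≤ s → s < t → t ≤ b → ‖f s t‖ ≤ K' * (t - s) ^ e s := by
  refine ⟨max K 0 + max C 0 / min δ 1, fun s t hs hst ht => ?_⟩
  obtain ⟨he0, he1⟩ := he s ⟨hs, hst.le.trans ht⟩
  have hpow : 0 ≤ (t - s) ^ e s := rpow_nonneg (sub_pos.2 hst).le _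
  have hm : 0 < min δ 1 := lt_min hδ one_pos
  have hC0 : 0 ≤ max C 0 / min δ 1 := div_nonneg (le_max_right _ _) hm.le
  rcases lt_or_ge (t - s) δ with hsmall | hlarge
  · calc ‖f s t‖ ≤ K * (t - s) ^ e s := hK s t hs hst ht hsmall
      _ ≤ max K 0 * (t - s) ^ e s := mul_le_mul_of_nonneg_right (le_max_left _ _) hpow
      _ ≤ _ := mul_le_mul_of_nonneg_right (le_add_of_nonneg_right hC0) hpow
  · calc ‖f s t‖ ≤ max C 0 / min δ 1 * min δ 1 := by
          rw [div_mul_cancel₀ _ hm.ne']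
          exact (hC s t hs hst ht).trans (le_max_left _ _)
      _ ≤ max C 0 / min δ 1 * (t - s) ^ e s :=
        mul_le_mul_of_nonneg_left (min_le_rpow hδ hlarge he0 he1) hC0
      _ ≤ _ := mul_le_mul_of_nonneg_right (le_add_of_nonneg_left (le_max_right _ _)) hpow

end RpowBounds

section ChenLift

variable {d : ℕ} (X : ℝ → EuclideanSpace ℝ (Fin d))

noncomputable def chenLift (F : ℝ → EuclideanSpace ℝ (Fin d × Fin d)) (s t : ℝ) :
    EuclideanSpace ℝ (Fin d × Fin d) :=
  F t - F s - tensor (X s) (X t - X s)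

lemma chenLift_chen (F : ℝ → EuclideanSpace ℝ (Fin d × Fin d)) (s u t : ℝ) :
    chenLift X F s t - chenLift X F s u - chenLift X F u t = tensor (X u - X s) (X t - X u) := by
  ext p
  simp only [chenLift, PiLp.sub_apply, tensor_apply]
  ring

variable {X}

lemma chenLift_congr {F G : ℝ → EuclideanSpace ℝ (Fin d × Fin d)} {s t : ℝ}
    (h : F t - F s = G t - G s) : chenLift X F s t = chenLift X G s t := by
  rw [chenLift, chenLift, h]

lemma chenLift_anchor_eq {Y : ℝ → ℝ → EuclideanSpace ℝ (Fin d × Fin d)} {a b s t : ℝ}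
    (hY : ∀ s u t : ℝ, a ≤ s → s ≤ u → u ≤ t → t ≤ b →
      Y s t - Y s u - Y u t = tensor (X u - X s) (X t - X u))
    (hs : a ≤ s) (hst : s ≤ t) (ht : t ≤ b) :
    chenLift X (fun u => Y a u + tensor (X a) (X u - X a)) s t = Y s t := by
  ext p
  have h := congrArg (· p) (hY a s t le_rfl hs hst ht)
  simp only [chenLift, PiLp.sub_apply, PiLp.add_apply, tensor_apply] at h ⊢
  linear_combination h

lemma norm_chenLift_le {F : ℝ → EuclideanSpace ℝ (Fin d × Fin d)} {s t CX CF : ℝ}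
    (hXs : ‖X s‖ ≤ CX) (hXt : ‖X t‖ ≤ CX) (hFs : ‖F s‖ ≤ CF) (hFt : ‖F t‖ ≤ CF) :
    ‖chenLift X F s t‖ ≤ 2 * CF + 2 * CX ^ 2 := by
  have hCX : 0 ≤ CX := (norm_nonneg _).trans hXs
  calc ‖chenLift X F s t‖ ≤ ‖F t‖ + ‖F s‖ + ‖X s‖ * ‖X t - X s‖ := by
        rw [chenLift, ← norm_tensor]
        exact (norm_sub_le _ _).trans (add_le_add (norm_sub_le _ _) le_rfl)
    _ ≤ CF + CF + CX * (CX + CX) := by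
        gcongr
        exact (norm_sub_le _ _).trans (add_le_add hXt hXs)
    _ = 2 * CF + 2 * CX ^ 2 := by ring

lemma norm_anchor_le {Y : ℝ → ℝ → EuclideanSpace ℝ (Fin d × Fin d)} {a b K e CX u : ℝ}
    (he0 : 0 ≤ e) (he1 : e ≤ 1)
    (hY : ∀ s u t : ℝ, a ≤ s → s ≤ u → u ≤ t → t ≤ b →
      Y s t - Y s u - Y u t = tensor (X u - X s) (X t - X u))
    (hYb : ∀ u, a < u → u ≤ b → ‖Y a u‖ ≤ K * (u - a) ^ e) (hX : ∀ u ∈ Icc a b, ‖X u‖ ≤ CX)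
    (hu : u ∈ Icc a b) :
    ‖Y a u + tensor (X a) (X u - X a)‖ ≤ |K| * max 1 (b - a) + CX * (CX + CX) := by
  have hab : a ≤ b := hu.1.trans hu.2
  have hYa : Y a a = 0 := by simpa using hY a a a le_rfl le_rfl le_rfl hab
  have hXa := hX a ⟨le_rfl, hab⟩
  calc ‖Y a u + tensor (X a) (X u - X a)‖ ≤ ‖Y a u‖ + ‖X a‖ * ‖X u - X a‖ :=
        norm_tensor (X a) _ ▸ norm_add_le _ _
    _ ≤ |K| * max 1 (b - a) + CX * (CX + CX) :=
        add_le_add (norm_le_of_rpow_bound he0 he1 hYa hYb hu) (mul_le_mul hXa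
          ((norm_sub_le _ _).trans (add_le_add (hX u hu) hXa)) (norm_nonneg _)
          ((norm_nonneg _).trans hXa))

end ChenLift

section Partition

lemma Monotone.mem_Icc_zero_last {α : Type*} [Preorder α] {N : ℕ} {ρ : Fin (N + 1) → α}
    (hρ : Monotone ρ) (j : Fin (N + 1)) : ρ j ∈ Icc (ρ 0) (ρ (Fin.last N)) :=
  ⟨hρ (Fin.zero_le j), hρ (Fin.le_last j)⟩

lemma StrictMono.exists_pos_le_one_and_le_succ_sub {N : ℕ} {ρ : Fin (N + 1) → ℝ}
    (hρ : StrictMono ρ) : ∃ δ, 0 < δ ∧ δ ≤ 1 ∧ ∀ i : Fin N, δ ≤ ρ i.succ - ρ i.castSucc :=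
  (eventually_mem_nhdsWithin.and (eventually_nhdsWithin_of_eventually_nhds
    ((eventually_le_nhds one_pos).and (eventually_all.2 fun i =>
      eventually_le_nhds (sub_pos.2 (hρ i.castSucc_lt_succ)))))).exists (f := 𝓝[>] (0:ℝ))

lemma Monotone.exists_castSucc_le_lt_succ {α : Type*} [LinearOrder α] :
    ∀ {N : ℕ} {ρ : Fin (N + 1) → α}, Monotone ρ → ∀ {x : α}, ρ 0 ≤ x → x < ρ (Fin.last N) →
      ∃ i : Fin N, ρ i.castSucc ≤ x ∧ x < ρ i.succ
  | 0, _, _, _, h0, hN => absurd (h0.trans_lt hN) (lt_irrefl _)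
  | n + 1, ρ, hρ, x, h0, hN => by
    by_cases h : ρ (Fin.last n).castSucc ≤ x
    · exact ⟨Fin.last n, h, by simpa using hN⟩
    · obtain ⟨i, h1, h2⟩ :=
        (hρ.comp Fin.strictMono_castSucc.monotone).exists_castSucc_le_lt_succ h0 (not_le.1 h)
      exact ⟨i.castSucc, h1, by simpa using h2⟩

end Partition

section Gluing

variable {E : Type*} {N : ℕ} {ρ : Fin (N + 1) → ℝ}

noncomputable def gluePieces [AddCommGroup E] (hρ : Monotone ρ) (G : Fin N → ℝ → E) (u : ℝ) : E :=
  ∑ j, IccExtend (hρ j.castSucc_le_succ) (G j ∘ Subtype.val) u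

lemma gluePieces_sub [AddCommGroup E] (hρ : Monotone ρ) (G : Fin N → ℝ → E) {i : Fin N} {s t : ℝ}
    (hs : ρ i.castSucc ≤ s) (hst : s ≤ t) (ht : t ≤ ρ i.succ) :
    gluePieces hρ G t - gluePieces hρ G s = G i t - G i s := by
  rw [gluePieces, gluePieces, ← Finset.sum_sub_distrib, Finset.sum_eq_single i]
  · rw [IccExtend_of_mem _ _ ⟨hs.trans hst, ht⟩, IccExtend_of_mem _ _ ⟨hs, hst.trans ht⟩]
    rfl
  · intro j _ hji
    rcases hji.lt_or_gt with hj | hj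
    · have h : ρ j.succ ≤ s := (hρ (Fin.succ_le_castSucc_iff.2 hj)).trans hs
      rw [IccExtend_of_right_le _ _ (h.trans hst), IccExtend_of_right_le _ _ h, sub_self]
    · have h : t ≤ ρ j.castSucc := ht.trans (hρ (Fin.succ_le_castSucc_iff.2 hj))
      rw [IccExtend_of_le_left _ _ h, IccExtend_of_le_left _ _ (hst.trans h), sub_self]
  · simp

lemma exists_norm_gluePieces_le [SeminormedAddCommGroup E] (hρ : Monotone ρ)
    {G : Fin N → ℝ → E} (hG : ∀ j, ∃ C, ∀ u ∈ Icc (ρ j.castSucc) (ρ j.succ), ‖G j u‖ ≤ C) :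
    ∃ C, ∀ u, ‖gluePieces hρ G u‖ ≤ C := by
  choose C hC using hG
  exact ⟨∑ j, C j, fun u =>
    (norm_sum_le _ _).trans (Finset.sum_le_sum fun j _ => hC j _ (Subtype.prop _))⟩

end Gluing

section SmallScales

variable {d : ℕ}

lemma rpow_sub_le_of_A1 {T CA : ℝ} {α : ℝ → ℝ}
    (hA1 : ∀ t ∈ Icc (0:ℝ) T, ∀ h : ℝ, 0 < |h| → |h| ≤ 1 →
      t + h ∈ Icc (0:ℝ) T → |h| ^ (α t - α (t + h)) ≤ CA)
    {s r : ℝ} (hs : 0 ≤ s) (hsr : s < r) (hr : r ≤ T) (hrs : r - s ≤ 1) :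
    (r - s) ^ (α r - α s) ≤ CA := by
  have habs : |s - r| = r - s := by rw [abs_sub_comm, abs_of_pos (sub_pos.2 hsr)]
  have h := hA1 r ⟨hs.trans hsr.le, hr⟩ (s - r) (by rw [habs]; linarith) (habs ▸ hrs)
    (by rw [add_sub_cancel]; exact ⟨hs, hsr.le.trans hr⟩)
  rwa [habs, add_sub_cancel] at h

lemma norm_add_add_tensor_le {Y₁ Y₂ : EuclideanSpace ℝ (Fin d × Fin d)}
    {a b : EuclideanSpace ℝ (Fin d)} {s r t αs αr K KX C : ℝ} (hsr : s < r) (hrt : r < t)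
    (hts : t - s ≤ 1) (hαs : 0 ≤ αs) (hαr : 0 ≤ αr) (hC : (r - s) ^ (αr - αs) ≤ C)
    (hY₁ : ‖Y₁‖ ≤ K * (r - s) ^ min (2 * αs) 1) (hY₂ : ‖Y₂‖ ≤ K * (t - r) ^ min (2 * αr) 1)
    (ha : ‖a‖ ≤ KX * (r - s) ^ αs) (hb : ‖b‖ ≤ KX * (t - r) ^ αr) :
    ‖Y₁ + Y₂ + tensor a b‖ ≤
      (K + K * max C 1 ^ 2 + KX ^ 2 * max C 1) * (t - s) ^ min (2 * αs) 1 := by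
  have hx : 0 < r - s := sub_pos.2 hsr
  have hy : 0 < t - r := sub_pos.2 hrt
  have hz : 0 < t - s := by linarith
  have hK : 0 ≤ K := nonneg_of_norm_le_mul_rpow hx hY₁
  have hC1 : 1 ≤ max C 1 := le_max_right _ _
  have hshift : (t - s) ^ αr ≤ max C 1 * (t - s) ^ αs :=
    rpow_le_max_mul_rpow hx (by linarith) hts hC
  have hsq : (t - s) ^ (2 * αr) ≤ max C 1 ^ 2 * (t - s) ^ (2 * αs) := by
    rw [two_mul, two_mul, rpow_add hz, rpow_add hz]
    exact (mul_self_le_mul_self (by positivity) hshift).trans_eq (by ring)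
  have hexp : (t - s) ^ (2 * αs) ≤ (t - s) ^ min (2 * αs) 1 :=
    rpow_le_rpow_of_exponent_ge hz hts (min_le_left _ _)
  have h₁ : (r - s) ^ min (2 * αs) 1 ≤ (t - s) ^ min (2 * αs) 1 :=
    rpow_le_rpow hx.le (by linarith) (by positivity)
  have h₂ : (t - r) ^ min (2 * αr) 1 ≤ max C 1 ^ 2 * (t - s) ^ min (2 * αs) 1 :=
    (rpow_le_rpow hy.le (by linarith) (by positivity)).trans
      (rpow_min_one_le hz hts (one_le_pow₀ hC1) hsq)
  have h₃ : (r - s) ^ αs * (t - r) ^ αr ≤ max C 1 * (t - s) ^ min (2 * αs) 1 :=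
    calc (r - s) ^ αs * (t - r) ^ αr ≤ (t - s) ^ αs * (max C 1 * (t - s) ^ αs) :=
          mul_le_mul (rpow_le_rpow hx.le (by linarith) hαs)
            ((rpow_le_rpow hy.le (by linarith) hαr).trans hshift) (by positivity) (by positivity)
      _ = max C 1 * (t - s) ^ (2 * αs) := by rw [two_mul, rpow_add hz]; ring
      _ ≤ max C 1 * (t - s) ^ min (2 * αs) 1 := by gcongr
  calc ‖Y₁ + Y₂ + tensor a b‖ ≤ ‖Y₁‖ + ‖Y₂‖ + ‖a‖ * ‖b‖ := norm_tensor a b ▸ norm_add₃_le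
    _ ≤ K * (r - s) ^ min (2 * αs) 1 + K * (t - r) ^ min (2 * αr) 1
        + KX ^ 2 * ((r - s) ^ αs * (t - r) ^ αr) := by
      rw [sq, mul_mul_mul_comm]
      exact add_le_add (add_le_add hY₁ hY₂)
        (mul_le_mul ha hb (norm_nonneg _) ((norm_nonneg _).trans ha))
    _ ≤ K * (t - s) ^ min (2 * αs) 1 + K * (max C 1 ^ 2 * (t - s) ^ min (2 * αs) 1)
        + KX ^ 2 * (max C 1 * (t - s) ^ min (2 * αs) 1) := by gcongr
    _ = _ := by ring

lemma norm_le_of_sub_lt_mesh {N : ℕ} {T CA KX K δ : ℝ} {α : ℝ → ℝ}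
    {X : ℝ → EuclideanSpace ℝ (Fin d)} {ρ : Fin (N + 1) → ℝ}
    {XX : ℝ → ℝ → EuclideanSpace ℝ (Fin d × Fin d)} (hα : ∀ t ∈ Icc (0:ℝ) T, 0 ≤ α t)
    (hA1 : ∀ t ∈ Icc (0:ℝ) T, ∀ h : ℝ, 0 < |h| → |h| ≤ 1 →
      t + h ∈ Icc (0:ℝ) T → |h| ^ (α t - α (t + h)) ≤ CA)
    (hX : ∀ s t : ℝ, 0 ≤ s → s < t → t ≤ T → ‖X t - X s‖ ≤ KX * (t - s) ^ α s)
    (hρ : Monotone ρ) (hρ0 : ρ 0 = 0) (hρN : ρ (Fin.last N) = T)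
    (hChen : ∀ s u t : ℝ, 0 ≤ s → s ≤ u → u ≤ t → t ≤ T →
      XX s t - XX s u - XX u t = tensor (X u - X s) (X t - X u))
    (hpiece : ∀ i : Fin N, ∀ s t : ℝ, ρ i.castSucc ≤ s → s < t → t ≤ ρ i.succ →
      ‖XX s t‖ ≤ K * (t - s) ^ min (2 * α s) 1)
    (hδ1 : δ ≤ 1) (hδ : ∀ i : Fin N, δ ≤ ρ i.succ - ρ i.castSucc)
    {s t : ℝ} (hs : 0 ≤ s) (hst : s < t) (ht : t ≤ T) (hts : t - s < δ) :
    ‖XX s t‖ ≤ (K + K * max CA 1 ^ 2 + KX ^ 2 * max CA 1) * (t - s) ^ min (2 * α s) 1 := by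
  have hρT : ∀ j, ρ j ∈ Icc 0 T := by simpa [hρ0, hρN] using hρ.mem_Icc_zero_last
  obtain ⟨i, hsi, hsi'⟩ :=
    hρ.exists_castSucc_le_lt_succ (hρ0.symm ▸ hs) (hρN.symm ▸ hst.trans_le ht)
  rcases le_or_gt t (ρ i.succ) with hti | hti
  · have h := hpiece i s t hsi hst hti
    have hK := nonneg_of_norm_le_mul_rpow (sub_pos.2 hst) h
    refine h.trans (mul_le_mul_of_nonneg_right ?_ (rpow_nonneg (sub_pos.2 hst).le _))
    have hC : 0 ≤ max CA 1 := zero_le_one.trans (le_max_right _ _)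
    linarith [mul_nonneg hK (sq_nonneg (max CA 1)), mul_nonneg (sq_nonneg KX) hC]
  · have hi : i.succ ≠ Fin.last N := fun h => by rw [h, hρN] at hti; linarith
    obtain ⟨j, hj⟩ : ∃ j : Fin N, ρ j.castSucc = ρ i.succ :=
      ⟨i.succ.castPred hi, by rw [Fin.castSucc_castPred]⟩
    have htj : t ≤ ρ j.succ := by linarith [hδ j]
    have hsplit : XX s t = XX s (ρ i.succ) + XX (ρ i.succ) t
        + tensor (X (ρ i.succ) - X s) (X t - X (ρ i.succ)) := by
      rw [← hChen s (ρ i.succ) t hs hsi'.le hti.le ht]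
      abel
    rw [hsplit]
    exact norm_add_add_tensor_le hsi' hti (by linarith) (hα s ⟨hs, by linarith⟩)
      (hα _ (hρT _)) (rpow_sub_le_of_A1 hA1 hs hsi' (hρT _).2 (by linarith))
      (hpiece i s _ hsi hsi' le_rfl) (hpiece j _ t hj.le hti htj)
      (hX s _ hs hsi' (hρT _).2) (hX _ t (hρT _).1 hti ht)

end SmallScales

theorem stmt8_general {d N : ℕ} (T : ℝ)
    (α : ℝ → ℝ) (hα : ∀ t ∈ Set.Icc (0:ℝ) T, 1/3 < α t ∧ α t < 1)
    (CA : ℝ)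
    (hA1 : ∀ t ∈ Set.Icc (0:ℝ) T, ∀ h : ℝ, 0 < |h| → |h| ≤ 1 →
      t + h ∈ Set.Icc (0:ℝ) T → |h| ^ (α t - α (t + h)) ≤ CA)
    (X : ℝ → EuclideanSpace ℝ (Fin d))
    (KX : ℝ)
    (hX : ∀ s t : ℝ, 0 ≤ s → s < t → t ≤ T → ‖X t - X s‖ ≤ KX * (t - s) ^ α s)
    (ρ : Fin (N + 1) → ℝ) (hρmono : StrictMono ρ) (hρ0 : ρ 0 = 0) (hρN : ρ (Fin.last N) = T)
    (XXloc : Fin N → ℝ → ℝ → EuclideanSpace ℝ (Fin d × Fin d))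
    (hChenLoc : ∀ i : Fin N, ∀ s u t : ℝ,
      ρ i.castSucc ≤ s → s ≤ u → u ≤ t → t ≤ ρ i.succ →
      XXloc i s t - XXloc i s u - XXloc i u t = tensor (X u - X s) (X t - X u))
    (Kloc : ℝ)
    (hBoundLoc : ∀ i : Fin N, ∀ s t : ℝ, ρ i.castSucc ≤ s → s < t → t ≤ ρ i.succ →
      ‖XXloc i s t‖ ≤ Kloc * (t - s) ^ min (2 * α s) 1) :
    ∃ XX : ℝ → ℝ → EuclideanSpace ℝ (Fin d × Fin d),
      (∀ i : Fin N, ∀ s t : ℝ, ρ i.castSucc ≤ s → s ≤ t → t ≤ ρ i.succ →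
        XX s t = XXloc i s t) ∧
      (∀ s u t : ℝ, 0 ≤ s → s ≤ u → u ≤ t → t ≤ T →
        XX s t - XX s u - XX u t = tensor (X u - X s) (X t - X u)) ∧
      (∃ K : ℝ, ∀ s t : ℝ, 0 ≤ s → s < t → t ≤ T →
        ‖XX s t‖ ≤ K * (t - s) ^ min (2 * α s) 1) := by
  have hρ := hρmono.monotone
  have hρT : ∀ j, ρ j ∈ Icc 0 T := by simpa [hρ0, hρN] using hρ.mem_Icc_zero_last
  have hα0 : ∀ t ∈ Icc (0:ℝ) T, 0 ≤ α t := fun t ht => by linarith [hα t ht]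
  have he : ∀ t ∈ Icc (0:ℝ) T, 0 ≤ min (2 * α t) 1 ∧ min (2 * α t) 1 ≤ 1 :=
    fun t ht => ⟨le_min (by linarith [hα0 t ht]) zero_le_one, min_le_right _ _⟩
  let G : Fin N → ℝ → EuclideanSpace ℝ (Fin d × Fin d) := fun i u =>
    XXloc i (ρ i.castSucc) u + tensor (X (ρ i.castSucc)) (X u - X (ρ i.castSucc))
  have hext : ∀ i : Fin N, ∀ s t, ρ i.castSucc ≤ s → s ≤ t → t ≤ ρ i.succ →
      chenLift X (gluePieces hρ G) s t = XXloc i s t := fun i s t hs hst ht => by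
    rw [chenLift_congr (gluePieces_sub hρ G hs hst ht)]
    exact chenLift_anchor_eq (hChenLoc i) hs hst ht
  refine ⟨chenLift X (gluePieces hρ G), hext, fun s u t _ _ _ _ => chenLift_chen X _ s u t, ?_⟩
  have h0T : (0:ℝ) ∈ Icc 0 T := hρ0 ▸ hρT 0
  obtain ⟨CX, hCX⟩ := exists_norm_le_of_rpow_bound (a := 0) (hα0 0 h0T) (hα 0 h0T).2.le
    fun u hu huT => by simpa using hX 0 u le_rfl hu huT
  obtain ⟨CF, hCF⟩ := exists_norm_gluePieces_le hρ (G := G) fun i => ⟨_, fun u hu =>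
    norm_anchor_le (he _ (hρT _)).1 (he _ (hρT _)).2 (hChenLoc i)
      (fun v hv hvb => hBoundLoc i _ v le_rfl hv hvb)
      (fun v hv => hCX v ⟨(hρT _).1.trans hv.1, hv.2.trans (hρT _).2⟩) hu⟩
  obtain ⟨δ, hδ0, hδ1, hδ⟩ := hρmono.exists_pos_le_one_and_le_succ_sub
  exact exists_rpow_bound_of_bounded hδ0 he
    (fun s t hs hst ht => norm_chenLift_le (hCX s ⟨hs, hst.le.trans ht⟩)
      (hCX t ⟨hs.trans hst.le, ht⟩) (hCF s) (hCF t))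
    (fun s t hs hst ht hts => norm_le_of_sub_lt_mesh hα0 hA1 hX hρ hρ0 hρN
      (fun s u t _ _ _ _ => chenLift_chen X _ s u t)
      (fun i s t h1 h2 h3 => hext i s t h1 h2.le h3 ▸ hBoundLoc i s t h1 h2 h3)
      hδ1 hδ hs hst ht hts)

/-- Gluing local iterated integrals to a variable order rough path: if on each square of a
partition there is a local iterated integral satisfying Chen's relation and the analytic
bound, then there is a global iterated integral extending them, satisfying Chen's relation
and the variable order bound `|𝕏(s,t)| ≲ |t−s|^{2α(s)∧1}` on all of `[0,T]`. -/
theorem stmt8 {d N : ℕ} (hN : 0 < N) (T : ℝ) (hT : 0 < T)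
    (α : ℝ → ℝ) (hα : ∀ t ∈ Set.Icc (0:ℝ) T, 1/3 < α t ∧ α t < 1)
    (CA : ℝ)
    (hA1 : ∀ t ∈ Set.Icc (0:ℝ) T, ∀ h : ℝ, 0 < |h| → |h| ≤ 1 →
      t + h ∈ Set.Icc (0:ℝ) T → |h| ^ (α t - α (t + h)) ≤ CA)
    (X : ℝ → EuclideanSpace ℝ (Fin d))
    (KX : ℝ)
    (hX : ∀ s t : ℝ, 0 ≤ s → s < t → t ≤ T → ‖X t - X s‖ ≤ KX * (t - s) ^ α s)
    (ρ : Fin (N + 1) → ℝ) (hρmono : StrictMono ρ) (hρ0 : ρ 0 = 0) (hρN : ρ (Fin.last N) = T)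
    (XXloc : Fin N → ℝ → ℝ → EuclideanSpace ℝ (Fin d × Fin d))
    (hChenLoc : ∀ i : Fin N, ∀ s u t : ℝ,
      ρ i.castSucc ≤ s → s ≤ u → u ≤ t → t ≤ ρ i.succ →
      XXloc i s t - XXloc i s u - XXloc i u t = tensor (X u - X s) (X t - X u))
    (Kloc : ℝ)
    (hBoundLoc : ∀ i : Fin N, ∀ s t : ℝ, ρ i.castSucc ≤ s → s < t → t ≤ ρ i.succ →
      ‖XXloc i s t‖ ≤ Kloc * (t - s) ^ min (2 * α s) 1) :
    ∃ XX : ℝ → ℝ → EuclideanSpace ℝ (Fin d × Fin d),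
      (∀ i : Fin N, ∀ s t : ℝ, ρ i.castSucc ≤ s → s ≤ t → t ≤ ρ i.succ →
        XX s t = XXloc i s t) ∧
      (∀ s u t : ℝ, 0 ≤ s → s ≤ u → u ≤ t → t ≤ T →
        XX s t - XX s u - XX u t = tensor (X u - X s) (X t - X u)) ∧
      (∃ K : ℝ, ∀ s t : ℝ, 0 ≤ s → s < t → t ≤ T →
        ‖XX s t‖ ≤ K * (t - s) ^ min (2 * α s) 1) :=
  stmt8_general T α hα CA hA1 X KX hX ρ hρmono hρ0 hρN XXloc hChenLoc Kloc hBoundLoc
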